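/- Suppose for each k, J_k(δ_k) ≤ α(V(x_k) − V(x_{k+1})) where V(x) = xᵀP̃x with P̃ ≻ 0, J_k(δ_k) ≥ x_kᵀ Q x_k · δ'_min for some δ'_min > 0 with Q ≻ 0. Then ∑_{k=0}^∞ x_kᵀQx_k converges, hence x_k → 0. -/

import Mathlib

/-!
Telescoping the Lyapunov decrease bounds the partial sums of `J` by `α V(x₀)`, so `J`, and with it
the `Q`-quadratic terms, are summable. The terms therefore tend to zero; writing `Q = Bᴴ B` with
`B` invertible, this says `B x_k → 0`, hence `x_k → 0`.
-/

open Matrix Filter Topology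

theorem summable_of_le_sub_succ {J V : ℕ → ℝ} (hJ : ∀ k, 0 ≤ J k) (hV : ∀ k, 0 ≤ V k)
    (h : ∀ k, J k ≤ V k - V (k + 1)) : Summable J := by
  refine summable_of_sum_range_le hJ (c := V 0) fun N => ?_
  calc ∑ k ∈ Finset.range N, J k ≤ ∑ k ∈ Finset.range N, (V k - V (k + 1)) :=
        Finset.sum_le_sum fun k _ => h k
    _ = V 0 - V N := Finset.sum_range_sub' V N
    _ ≤ V 0 := sub_le_self _ (hV N)

theorem norm_le_sqrt_dotProduct_self {ι : Type*} [Fintype ι] (v : ι → ℝ) :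
    ‖v‖ ≤ √(v ⬝ᵥ v) := by
  refine (pi_norm_le_iff_of_nonneg (Real.sqrt_nonneg _)).2 fun i => Real.le_sqrt_of_sq_le ?_
  rw [Real.norm_eq_abs, sq_abs, sq]
  exact Finset.single_le_sum (f := fun j => v j * v j) (fun j _ => mul_self_nonneg _)
    (Finset.mem_univ i)

theorem tendsto_zero_of_tendsto_dotProduct_self {ι α : Type*} [Fintype ι] {l : Filter α}
    {y : α → ι → ℝ} (h : Tendsto (fun k => y k ⬝ᵥ y k) l (𝓝 0)) : Tendsto y l (𝓝 0) := by
  refine squeeze_zero_norm (fun k => norm_le_sqrt_dotProduct_self (y k)) ?_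
  simpa using h.sqrt

theorem Matrix.dotProduct_conjTranspose_mul_self_mulVec {ι : Type*} [Fintype ι]
    (B : Matrix ι ι ℝ) (v : ι → ℝ) : v ⬝ᵥ (Bᴴ * B) *ᵥ v = B *ᵥ v ⬝ᵥ B *ᵥ v := by
  rw [← mulVec_mulVec, dotProduct_mulVec, conjTranspose_eq_transpose_of_trivial, vecMul_transpose]

theorem Matrix.PosSemidef.dotProduct_mulVec_self_nonneg {ι : Type*} [Fintype ι]
    {M : Matrix ι ι ℝ} (hM : M.PosSemidef) (v : ι → ℝ) : 0 ≤ v ⬝ᵥ M *ᵥ v := by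
  simpa using hM.dotProduct_mulVec_nonneg v

theorem Matrix.PosDef.tendsto_zero_of_tendsto_dotProduct_mulVec {ι α : Type*} [Fintype ι]
    [DecidableEq ι] {Q : Matrix ι ι ℝ} (hQ : Q.PosDef) {l : Filter α} {x : α → ι → ℝ}
    (h : Tendsto (fun k => x k ⬝ᵥ Q *ᵥ x k) l (𝓝 0)) : Tendsto x l (𝓝 0) := by
  open scoped MatrixOrder in
  obtain ⟨B, rfl⟩ := CStarAlgebra.nonneg_iff_eq_star_mul_self.mp hQ.posSemidef.nonneg
  have hB : IsUnit B.det := by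
    have := (isUnit_iff_isUnit_det _).mp hQ.isUnit
    rw [star_eq_conjTranspose, det_mul] at this
    exact isUnit_of_mul_isUnit_right this
  have hBx : Tendsto (fun k => B *ᵥ x k) l (𝓝 0) :=
    tendsto_zero_of_tendsto_dotProduct_self <| by
      simpa only [star_eq_conjTranspose, dotProduct_conjTranspose_mul_self_mulVec] using h
  have hcont : Continuous fun v : ι → ℝ => B⁻¹ *ᵥ v :=
    (mulVecLin B⁻¹).continuous_of_finiteDimensional
  simpa only [Function.comp_def, mulVec_mulVec, nonsing_inv_mul B hB, one_mulVec, mulVec_zero]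
    using (hcont.tendsto 0).comp hBx

theorem stmt_19 (n : ℕ)
    (P Q : Matrix (Fin n) (Fin n) ℝ) (hP : P.PosDef) (hQ : Q.PosDef)
    (α δmin : ℝ) (hα : 0 < α) (hδ : 0 < δmin)
    (x : ℕ → (Fin n → ℝ)) (J : ℕ → ℝ) (hJ : ∀ k, 0 ≤ J k)
    (hup : ∀ k, J k ≤ α * ((x k) ⬝ᵥ P.mulVec (x k) - (x (k + 1)) ⬝ᵥ P.mulVec (x (k + 1))))
    (hlow : ∀ k, ((x k) ⬝ᵥ Q.mulVec (x k)) * δmin ≤ J k) :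
    Summable (fun k => (x k) ⬝ᵥ Q.mulVec (x k)) ∧
    Filter.Tendsto x Filter.atTop (nhds 0) := by
  have hV : ∀ k, 0 ≤ α * (x k ⬝ᵥ P *ᵥ x k) := fun k =>
    mul_nonneg hα.le (hP.posSemidef.dotProduct_mulVec_self_nonneg (x k))
  have hJsum : Summable J :=
    summable_of_le_sub_succ hJ hV fun k => (hup k).trans_eq (mul_sub _ _ _)
  have hq : Summable fun k => x k ⬝ᵥ Q *ᵥ x k :=
    .of_nonneg_of_le (fun k => hQ.posSemidef.dotProduct_mulVec_self_nonneg (x k))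
      (fun k => (le_div_iff₀ hδ).2 (hlow k)) (hJsum.div_const δmin)
  exact ⟨hq, hQ.tendsto_zero_of_tendsto_dotProduct_mulVec hq.tendsto_atTop_zero⟩
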